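/- Let r ≥ 3, A ∈ 𝒯_r, e_0 ∈ E(A), and let t be a real number with 0 < t < 1. Then there exists an A-admissible tuple 𝔭 = (p_e)_{e∈E(A)} of positive reals with p_{e_0} = t. -/

import Mathlib

noncomputable section

/-- A plane (rooted) binary tree with leaves labeled by elements of `Fin r`. -/
inductive PTree (r : ℕ) : Type
  | leaf : Fin r → PTree r
  | node : PTree r → PTree r → PTree r

namespace PTree

variable {r : ℕ}

/-- The labels of the leaves of the tree, listed from left to right. -/
def leafLabels : PTree r → List (Fin r)
  | .leaf i => [i]
  | .node l t => l.leafLabels ++ t.leafLabels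

/-- `A ∈ 𝒯_r`: the `r` leaves of `A` are labeled bijectively by `Fin r`. -/
def IsTree (A : PTree r) : Prop :=
  A.leafLabels.Nodup ∧ A.leafLabels.length = r

/-- The label of the rightmost leaf of the tree. -/
def rightmost : PTree r → Fin r
  | .leaf i => i
  | .node _ t => t.rightmost

/-- The subtree of a tree at the address `p` (`false` = go to the left child,
`true` = go to the right child), if the address is valid. -/
def subtreeAt : PTree r → List Bool → Option (PTree r)
  | t, [] => some t
  | .leaf _, _ :: _ => none
  | .node l t, b :: p => (if b then t else l).subtreeAt p

/-- `p` is the address of an internal (non-leaf) vertex of `A`; the set of such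
addresses is `V(A)`. -/
def IsVertex (A : PTree r) (p : List Bool) : Prop :=
  ∃ l t : PTree r, A.subtreeAt p = some (.node l t)

/-- `p` is the address of the lower endpoint `d(e)` of an internal edge `e` of
`A` (an edge not adjacent to a leaf); the upper endpoint `u(e)` is at the
address `p.dropLast`.  The set of such addresses is `E(A)`. -/
def IsEdge (A : PTree r) (p : List Bool) : Prop :=
  p ≠ [] ∧ A.IsVertex p

/-- The type `E(A)` of internal edges of `A`. -/
abbrev Edge (A : PTree r) : Type := {p : List Bool // A.IsEdge p}

/-- `x_v = z_{L(v)} − z_{R(v)}` for the internal vertex `v` given as the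
subtree rooted at it (junk value `0` at leaves). -/
def xval (z : Fin r → ℂ) : PTree r → ℂ
  | .leaf _ => 0
  | .node l t => z l.rightmost - z t.rightmost

/-- The coordinate `x_v` for the vertex `v` of `A` with address `p`. -/
def xAt (A : PTree r) (z : Fin r → ℂ) (p : List Bool) : ℂ :=
  match A.subtreeAt p with
  | some t => xval z t
  | none => 0

/-- The coordinate `ζ_e = x_{d(e)} / x_{u(e)}` for the edge of `A` whose lower
endpoint has address `p` (its upper endpoint has address `p.dropLast`). -/
def zetaAt (A : PTree r) (z : Fin r → ℂ) (p : List Bool) : ℂ :=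
  xAt A z p / xAt A z p.dropLast

/-- `Leaf(e)`: the labels of the leaves descending from the vertex of `A` with
address `p`. -/
def leavesAt (A : PTree r) (p : List Bool) : List (Fin r) :=
  ((A.subtreeAt p).map leafLabels).getD []

/-- The label of the rightmost leaf descending from the vertex of `A` with
address `p`. -/
def rightmostAt (A : PTree r) (p : List Bool) : Option (Fin r) :=
  (A.subtreeAt p).map rightmost

end PTree

/-- The configuration space `X_r = {(z_1,…,z_r) ∈ ℂ^r : z_i ≠ z_j for i ≠ j}`. -/
def ConfigSpace (r : ℕ) : Set (Fin r → ℂ) :=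
  {z | ∀ i j : Fin r, i ≠ j → z i ≠ z j}

namespace PTree

variable {r : ℕ}

/-- The `A`-coordinate map `Ψ_A = (z_A, x_A, (ζ_e)_{e ∈ E(A)})`, where
`z_A = z_{r_A}` (`r_A` the rightmost leaf of `A`) and `x_A = x_{t_A}` (`t_A`
the root of `A`). -/
def psi (A : PTree r) (z : Fin r → ℂ) : ℂ × ℂ × (A.Edge → ℂ) :=
  (z A.rightmost, xval z A, fun e => A.zetaAt z e.1)

/-- The variable index type for the polynomial ring
`ℂ[z_A, x_A, ζ_e (e ∈ E(A))]`. -/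
abbrev Idx (A : PTree r) : Type := Unit ⊕ Unit ⊕ A.Edge

/-- The point of `ℂ^{Idx A}` corresponding to `w = (z_A, x_A, (ζ_e)_e)`. -/
def assign (A : PTree r) (w : ℂ × ℂ × (A.Edge → ℂ)) : A.Idx → ℂ :=
  Sum.elim (fun _ => w.1) (Sum.elim (fun _ => w.2.1) fun e => w.2.2 e)

/-- The polynomial map `Φ_A : ℂ × ℂ × ℂ^{E(A)} → ℂ^r` determined by a family
of polynomials `P`. -/
def phiMap (A : PTree r) (P : Fin r → MvPolynomial A.Idx ℂ)
    (w : ℂ × ℂ × (A.Edge → ℂ)) : Fin r → ℂ :=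
  fun i => MvPolynomial.eval (A.assign w) (P i)

/-- `Φ_A ∘ Ψ_A = id` on `X_r`. -/
def PhiPsiId (A : PTree r) (P : Fin r → MvPolynomial A.Idx ℂ) : Prop :=
  ∀ z ∈ ConfigSpace r, A.phiMap P (A.psi z) = z

/-- `Ψ_A ∘ Φ_A = id` on `ℂ × ℂ^× × (ℂ^×)^{E(A)}`. -/
def PsiPhiId (A : PTree r) (P : Fin r → MvPolynomial A.Idx ℂ) : Prop :=
  ∀ w : ℂ × ℂ × (A.Edge → ℂ), w.2.1 ≠ 0 → (∀ e, w.2.2 e ≠ 0) →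
    A.psi (A.phiMap P w) = w

end PTree

/-- The cut plane `ℂ^cut = ℂ ∖ ℝ_{≤0}`. -/
def cutPlane : Set ℂ := {w : ℂ | 0 < w.re ∨ w.im ≠ 0}

namespace PTree

variable {r : ℕ}

/-- The region `ℂ × ℂ^cut × ∏_{e ∈ E(A)} 𝔻_{p_e}^cut` in `ℂ × ℂ × ℂ^{E(A)}`. -/
def cutRegion (A : PTree r) (p : A.Edge → ℝ) : Set (ℂ × ℂ × (A.Edge → ℂ)) :=
  {w | w.2.1 ∈ cutPlane ∧ ∀ e, w.2.2 e ∈ cutPlane ∧ ‖w.2.2 e‖ < p e}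

/-- The tuple `p = (p_e)_{e∈E(A)}` is `A`-admissible:
`Φ_A(ℂ × ℂ^× × ∏_e 𝔻_{p_e}^×) ⊆ X_r`. -/
def Admissible (A : PTree r) (P : Fin r → MvPolynomial A.Idx ℂ)
    (p : A.Edge → ℝ) : Prop :=
  ∀ w : ℂ × ℂ × (A.Edge → ℂ), w.2.1 ≠ 0 →
    (∀ e, w.2.2 e ≠ 0 ∧ ‖w.2.2 e‖ < p e) →
      A.phiMap P w ∈ ConfigSpace r

/-- `U_A^𝔭 = Φ_A(ℂ × ℂ^cut × ∏_e 𝔻_{p_e}^cut)`. -/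
def UAp (A : PTree r) (P : Fin r → MvPolynomial A.Idx ℂ) (p : A.Edge → ℝ) :
    Set (Fin r → ℂ) :=
  A.phiMap P '' A.cutRegion p

/-- `U_A = ⋃ U_A^𝔭`, the union over all `A`-admissible tuples of positive
reals `𝔭`. -/
def UA (A : PTree r) (P : Fin r → MvPolynomial A.Idx ℂ) : Set (Fin r → ℂ) :=
  ⋃ (p : A.Edge → ℝ) (_ : (∀ e, 0 < p e) ∧ A.Admissible P p), A.UAp P p

end PTree

/-!
Weight every internal edge of `A` by `ε = (1 - t)/8`, except `e₀`, which gets weight `t`.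
If `|ζ_e| ≤ ρ_e` for all edges, then `|x_{d(e)}| ≤ ρ_e |x_{u(e)}|`, and an induction shows that
every leaf `i` below a vertex `v` satisfies `|z_i - z_{R(v)}| ≤ B_v |x_v|`, where
`B_v = 1 + Σ_{children c} ρ_c B_c`. Two leaves `i ≠ j` separate at a vertex `v`, and
`z_i = z_j` would give `|x_v| ≤ (B_v - 1) |x_v|`, impossible since `x_v ≠ 0` (all `ζ_e` and
`x_A` are nonzero) and `B_v < 2`: below `e₀` all weights are `ε`, so `B_{d(e₀)} ≤ 1 + 4ε`, and
`t (1 + 4ε) + 2ε < 1`.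
-/

namespace PTree

variable {r : ℕ}

section Addresses

variable (A : PTree r) (z : Fin r → ℂ)

lemma subtreeAt_append (q q' : List Bool) :
    A.subtreeAt (q ++ q') = (A.subtreeAt q).bind (·.subtreeAt q') := by
  induction q generalizing A with
  | nil => rfl
  | cons b q ih =>
    cases A with
    | leaf i => rfl
    | node l t => exact ih _

variable {A}

lemma subtreeAt_append_singleton {q : List Bool} {l t : PTree r}
    (h : A.subtreeAt q = some (.node l t)) (b : Bool) :
    A.subtreeAt (q ++ [b]) = some (if b then t else l) := by
  rw [subtreeAt_append, h]
  cases b <;> rfl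

lemma IsVertex.of_append_singleton {q : List Bool} {b : Bool} (h : A.IsVertex (q ++ [b])) :
    A.IsVertex q := by
  obtain ⟨l, t, h⟩ := h
  rw [subtreeAt_append] at h
  match hq : A.subtreeAt q with
  | none => simp [hq] at h
  | some (.leaf _) => simp [hq, subtreeAt] at h
  | some (.node l' t') => exact ⟨l', t', hq⟩

lemma xAt_of_subtreeAt {q : List Bool} {T : PTree r} (h : A.subtreeAt q = some T) :
    A.xAt z q = xval z T := by
  rw [xAt, h]

lemma xAt_eq_zero_of_not_isVertex {q : List Bool} (h : ¬ A.IsVertex q) : A.xAt z q = 0 := by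
  unfold xAt
  match hq : A.subtreeAt q with
  | none => rfl
  | some (.leaf _) => rfl
  | some (.node l t) => exact absurd ⟨l, t, hq⟩ h

lemma zetaAt_append_singleton (q : List Bool) (b : Bool) :
    A.zetaAt z (q ++ [b]) = A.xAt z (q ++ [b]) / A.xAt z q := by
  rw [zetaAt, List.dropLast_concat]

end Addresses

section Estimates

variable {A : PTree r} {z : Fin r → ℂ} {ρ : List Bool → ℝ}

lemma xAt_ne_zero (hroot : xval z A ≠ 0) (hζ : ∀ q, A.IsEdge q → A.zetaAt z q ≠ 0)
    (q : List Bool) (hv : A.IsVertex q) : A.xAt z q ≠ 0 := by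
  rcases eq_or_ne q [] with rfl | hq
  · exact hroot
  · intro hx
    exact hζ q ⟨hq, hv⟩ (by rw [zetaAt, hx, zero_div])

lemma norm_xAt_append_singleton_le (hρ : ∀ q, 0 ≤ ρ q) (hroot : xval z A ≠ 0)
    (hζ : ∀ q, A.IsEdge q → A.zetaAt z q ≠ 0 ∧ ‖A.zetaAt z q‖ ≤ ρ q) (q : List Bool) (b : Bool) :
    ‖A.xAt z (q ++ [b])‖ ≤ ρ (q ++ [b]) * ‖A.xAt z q‖ := by
  by_cases hv : A.IsVertex (q ++ [b])
  · have hq := xAt_ne_zero hroot (fun q hq => (hζ q hq).1) q hv.of_append_singleton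
    have hζq := (hζ _ ⟨by simp, hv⟩).2
    rw [zetaAt_append_singleton, norm_div, div_le_iff₀ (norm_pos_iff.mpr hq)] at hζq
    exact hζq
  · rw [xAt_eq_zero_of_not_isVertex z hv, norm_zero]
    exact mul_nonneg (hρ _) (norm_nonneg _)

end Estimates

/-- The constant `B_v` of the estimate `|z_i - z_{R(v)}| ≤ B_v |x_v|`, for the vertex `v = T` at
address `q`; the edge into the vertex at address `q'` has weight `ρ q'`. -/
def spread (ρ : List Bool → ℝ) : List Bool → PTree r → ℝ
  | _, .leaf _ => 0
  | q, .node l t => 1 + ρ (q ++ [false]) * spread ρ (q ++ [false]) l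
      + ρ (q ++ [true]) * spread ρ (q ++ [true]) t

section Spread

variable {ρ : List Bool → ℝ}

lemma spread_nonneg (hρ : ∀ q, 0 ≤ ρ q) (q : List Bool) (T : PTree r) : 0 ≤ spread ρ q T := by
  induction T generalizing q with
  | leaf => exact le_rfl
  | node l t ihl iht =>
    have := mul_nonneg (hρ (q ++ [false])) (ihl (q ++ [false]))
    have := mul_nonneg (hρ (q ++ [true])) (iht (q ++ [true]))
    simp only [spread]
    linarith

lemma spread_le_of_forall_le (hρ : ∀ q, 0 ≤ ρ q) {ε : ℝ} (hε : ε ≤ 1 / 4) (T : PTree r)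
    (q : List Bool) (hq : ∀ π ≠ [], ρ (q ++ π) ≤ ε) : spread ρ q T ≤ 1 + 4 * ε := by
  have hε0 : 0 ≤ ε := (hρ _).trans (hq [false] (by simp))
  induction T generalizing q with
  | leaf => simp only [spread]; linarith
  | node l t ihl iht =>
    have hchild : ∀ b : Bool, ∀ π ≠ [], ρ (q ++ [b] ++ π) ≤ ε := fun b π _ => by
      simpa using hq (b :: π) (by simp)
    have hterm : ∀ b : Bool, ∀ T : PTree r, spread ρ (q ++ [b]) T ≤ 1 + 4 * ε →
        ρ (q ++ [b]) * spread ρ (q ++ [b]) T ≤ ε * (1 + 4 * ε) := fun b T hT =>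
      mul_le_mul (hq [b] (by simp)) hT (spread_nonneg hρ _ _) hε0
    have := hterm false l (ihl _ (hchild false))
    have := hterm true t (iht _ (hchild true))
    simp only [spread]
    nlinarith

lemma spread_update_lt_two {e₀ : List Bool} {t ε : ℝ} (ht : 0 ≤ t) (hε0 : 0 ≤ ε)
    (hε : ε < 1 / 4) (htε : t * (1 + 4 * ε) + 2 * ε < 1) (q : List Bool) (T : PTree r) :
    spread (Function.update (fun _ => ε) e₀ t) q T < 2 := by
  set ρ := Function.update (fun _ => ε) e₀ t
  have hρ : ∀ q, 0 ≤ ρ q := fun q => by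
    by_cases h : q = e₀ <;> simp [ρ, h, ht, hε0]
  have hbelow : ∀ π ≠ [], ρ (e₀ ++ π) ≤ ε := fun π hπ => by simp [ρ, hπ]
  induction T generalizing q with
  | leaf => simp [spread]
  | node l t' ihl iht =>
    have hterm : ∀ b : Bool, ∀ T : PTree r, spread ρ (q ++ [b]) T < 2 →
        ρ (q ++ [b]) * spread ρ (q ++ [b]) T ≤
          if q ++ [b] = e₀ then t * (1 + 4 * ε) else ε * 2 := fun b T hT => by
      split_ifs with he
      · rw [he, show ρ e₀ = t from Function.update_self ..]
        exact mul_le_mul_of_nonneg_left (spread_le_of_forall_le hρ hε.le T e₀ hbelow) ht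
      · rw [show ρ (q ++ [b]) = ε from Function.update_of_ne he ..]
        exact mul_le_mul_of_nonneg_left hT.le hε0
    have hl := hterm false l (ihl _)
    have ht' := hterm true t' (iht _)
    simp only [spread]
    by_cases hf : q ++ [false] = e₀
    · have htr : q ++ [true] ≠ e₀ := by rw [← hf]; simp
      rw [if_pos hf] at hl
      rw [if_neg htr] at ht'
      linarith
    · rw [if_neg hf] at hl
      split_ifs at ht' <;> nlinarith

end Spread

section Separation

variable {A : PTree r} {z : Fin r → ℂ} {ρ : List Bool → ℝ}

lemma norm_xval_child_le (hx : ∀ q b, ‖A.xAt z (q ++ [b])‖ ≤ ρ (q ++ [b]) * ‖A.xAt z q‖)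
    {q : List Bool} {l t : PTree r} (hT : A.subtreeAt q = some (.node l t)) (b : Bool) :
    ‖xval z (if b then t else l)‖ ≤ ρ (q ++ [b]) * ‖xval z (.node l t)‖ := by
  simpa only [xAt_of_subtreeAt z (subtreeAt_append_singleton hT b), xAt_of_subtreeAt z hT]
    using hx q b

lemma norm_sub_rightmost_le (hρ : ∀ q, 0 ≤ ρ q)
    (hx : ∀ q b, ‖A.xAt z (q ++ [b])‖ ≤ ρ (q ++ [b]) * ‖A.xAt z q‖)
    (T : PTree r) (q : List Bool) (hT : A.subtreeAt q = some T) :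
    ∀ i ∈ T.leafLabels, ‖z i - z T.rightmost‖ ≤ spread ρ q T * ‖xval z T‖ := by
  induction T generalizing q with
  | leaf a => simp [leafLabels, rightmost, spread]
  | node l t ihl iht =>
    intro i hi
    have hl : ‖xval z l‖ ≤ _ := norm_xval_child_le hx hT false
    have ht : ‖xval z t‖ ≤ _ := norm_xval_child_le hx hT true
    have := mul_le_mul_of_nonneg_left hl (spread_nonneg hρ (q ++ [false]) l)
    have := mul_le_mul_of_nonneg_left ht (spread_nonneg hρ (q ++ [true]) t)
    have hX := norm_nonneg (xval z (.node l t))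
    have := mul_nonneg (mul_nonneg (hρ (q ++ [false])) (spread_nonneg hρ (q ++ [false]) l)) hX
    have := mul_nonneg (mul_nonneg (hρ (q ++ [true])) (spread_nonneg hρ (q ++ [true]) t)) hX
    simp only [leafLabels, List.mem_append] at hi
    simp only [rightmost, spread]
    rcases hi with hi | hi
    · have := ihl _ (subtreeAt_append_singleton hT false) i hi
      calc ‖z i - z t.rightmost‖ = ‖(z i - z l.rightmost) + xval z (.node l t)‖ := by
            simp only [xval]; ring_nf
        _ ≤ ‖z i - z l.rightmost‖ + ‖xval z (.node l t)‖ := norm_add_le _ _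
        _ ≤ _ := by nlinarith
    · have := iht _ (subtreeAt_append_singleton hT true) i hi
      nlinarith

lemma norm_xval_le_of_mem_of_mem (hρ : ∀ q, 0 ≤ ρ q)
    (hx : ∀ q b, ‖A.xAt z (q ++ [b])‖ ≤ ρ (q ++ [b]) * ‖A.xAt z q‖) {q : List Bool} {l t : PTree r}
    (hT : A.subtreeAt q = some (.node l t)) {i j : Fin r} (hi : i ∈ l.leafLabels)
    (hj : j ∈ t.leafLabels) :
    ‖xval z (.node l t)‖ ≤ ‖z i - z j‖ + (spread ρ q (.node l t) - 1) * ‖xval z (.node l t)‖ := by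
  have hi' := norm_sub_rightmost_le hρ hx l _ (subtreeAt_append_singleton hT false) i hi
  have hj' := norm_sub_rightmost_le hρ hx t _ (subtreeAt_append_singleton hT true) j hj
  have hl : ‖xval z l‖ ≤ _ := norm_xval_child_le hx hT false
  have ht : ‖xval z t‖ ≤ _ := norm_xval_child_le hx hT true
  have := mul_le_mul_of_nonneg_left hl (spread_nonneg hρ (q ++ [false]) l)
  have := mul_le_mul_of_nonneg_left ht (spread_nonneg hρ (q ++ [true]) t)
  have hsplit : ‖xval z (.node l t)‖ ≤
      ‖z l.rightmost - z i‖ + ‖z i - z j‖ + ‖z j - z t.rightmost‖ := by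
    calc ‖xval z (.node l t)‖ = ‖(z l.rightmost - z i) + (z i - z j) + (z j - z t.rightmost)‖ := by
          simp only [xval]; ring_nf
      _ ≤ _ := norm_add₃_le
  rw [norm_sub_rev] at hsplit
  simp only [spread]
  nlinarith

lemma injOn_leafLabels (hρ : ∀ q, 0 ≤ ρ q)
    (hx : ∀ q b, ‖A.xAt z (q ++ [b])‖ ≤ ρ (q ++ [b]) * ‖A.xAt z q‖)
    (hne : ∀ q, A.IsVertex q → A.xAt z q ≠ 0)
    (hspread : ∀ q (T : PTree r), spread ρ q T < 2)
    (T : PTree r) (q : List Bool) (hT : A.subtreeAt q = some T) :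
    Set.InjOn z {i | i ∈ T.leafLabels} := by
  induction T generalizing q with
  | leaf a =>
    intro i hi j hj _
    simp_all [leafLabels]
  | node l t ihl iht =>
    have hcross : ∀ i ∈ l.leafLabels, ∀ j ∈ t.leafLabels, z i ≠ z j := by
      intro i hi j hj hij
      have hpos : 0 < ‖xval z (.node l t)‖ :=
        norm_pos_iff.mpr (xAt_of_subtreeAt z hT ▸ hne q ⟨l, t, hT⟩)
      have := norm_xval_le_of_mem_of_mem hρ hx hT hi hj
      rw [hij, sub_self, norm_zero, zero_add] at this
      nlinarith [hspread q (.node l t)]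
    intro i hi j hj hij
    simp only [Set.mem_ofPred_eq, leafLabels, List.mem_append] at hi hj
    rcases hi with hi | hi <;> rcases hj with hj | hj
    · exact ihl _ (subtreeAt_append_singleton hT false) hi hj hij
    · exact absurd hij (hcross i hi j hj)
    · exact absurd hij.symm (hcross j hj i hi)
    · exact iht _ (subtreeAt_append_singleton hT true) hi hj hij

end Separation

lemma IsTree.mem_leafLabels {A : PTree r} (hA : A.IsTree) (i : Fin r) : i ∈ A.leafLabels := by
  have hcard : A.leafLabels.toFinset = Finset.univ := by
    apply Finset.eq_univ_of_card
    rw [List.toFinset_card_of_nodup hA.1, hA.2, Fintype.card_fin]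
  rw [← List.mem_toFinset, hcard]
  exact Finset.mem_univ i

lemma mem_configSpace_of_norm_zetaAt_le {A : PTree r} (hA : A.IsTree) {z : Fin r → ℂ}
    {ρ : List Bool → ℝ} (hρ : ∀ q, 0 ≤ ρ q) (hspread : ∀ q (T : PTree r), spread ρ q T < 2)
    (hroot : xval z A ≠ 0)
    (hζ : ∀ q, A.IsEdge q → A.zetaAt z q ≠ 0 ∧ ‖A.zetaAt z q‖ ≤ ρ q) :
    z ∈ ConfigSpace r := fun i j hij hz =>
  hij <| injOn_leafLabels hρ (norm_xAt_append_singleton_le hρ hroot hζ)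
    (xAt_ne_zero hroot fun q hq => (hζ q hq).1) hspread A [] rfl
    (hA.mem_leafLabels i) (hA.mem_leafLabels j) hz

end PTree

theorem stmt_13_general {r : ℕ} (A : PTree r) (hA : A.IsTree)
    (e₀ : List Bool) (he₀ : A.IsEdge e₀)
    (P : Fin r → MvPolynomial A.Idx ℂ)
    (hPsiPhi : A.PsiPhiId P)
    (t : ℝ) (ht0 : 0 < t) (ht1 : t < 1) :
    ∃ p : A.Edge → ℝ, (∀ e, 0 < p e) ∧ p ⟨e₀, he₀⟩ = t ∧ A.Admissible P p := by
  set ε := (1 - t) / 8 with hε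
  set ρ := Function.update (fun _ => ε) e₀ t
  have hρ : ∀ q, 0 < ρ q := fun q => by
    by_cases h : q = e₀ <;> simp [ρ, ε, h, ht0, ht1]
  refine ⟨fun e => ρ e.1, fun e => hρ e.1, Function.update_self .., ?_⟩
  intro w hw hwζ
  have hψ := hPsiPhi w hw fun e => (hwζ e).1
  refine PTree.mem_configSpace_of_norm_zetaAt_le hA (fun q => (hρ q).le)
    (PTree.spread_update_lt_two ht0.le (by positivity) (by linarith) (by rw [hε]; nlinarith))
    (by rwa [← congrArg (·.2.1) hψ] at hw) fun q hq => ?_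
  rw [show A.zetaAt (A.phiMap P w) q = w.2.2 ⟨q, hq⟩ from congrFun (congrArg (·.2.2) hψ) ⟨q, hq⟩]
  exact ⟨(hwζ _).1, (hwζ _).2.le⟩

/-- Let `r ≥ 3`, `A ∈ 𝒯_r`, `e₀ ∈ E(A)`, let `Φ_A` be the polynomial map
inverting `Ψ_A`, and let `t` be a real number with `0 < t < 1`.  Then there
exists an `A`-admissible tuple `𝔭 = (p_e)_{e∈E(A)}` of positive reals with
`p_{e₀} = t`. -/
theorem stmt_13 {r : ℕ} (hr : 3 ≤ r) (A : PTree r) (hA : A.IsTree)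
    (e₀ : List Bool) (he₀ : A.IsEdge e₀)
    (P : Fin r → MvPolynomial A.Idx ℂ)
    (hPhiPsi : A.PhiPsiId P) (hPsiPhi : A.PsiPhiId P)
    (t : ℝ) (ht0 : 0 < t) (ht1 : t < 1) :
    ∃ p : A.Edge → ℝ, (∀ e, 0 < p e) ∧ p ⟨e₀, he₀⟩ = t ∧ A.Admissible P p :=
  stmt_13_general A hA e₀ he₀ P hPsiPhi t ht0 ht1
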